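/- Let Ψ be a Young function, a ∈ ℝⁿ, and r, r₀ > 0. Then ‖χ_{B(a,r₀)}‖_{wM_{Ψ,B(a,r)}} = 1/Ψ⁻¹(|B(a,r)|/|B(a,r) ∩ B(a,r₀)|), where ‖f‖_{wM_{Ψ,B}} := inf{b > 0 : sup_{t>0} Ψ(t)·|{x ∈ B : |f(x)|/b > t}|/|B| ≤ 1} and Ψ⁻¹(s) := inf{u ≥ 0 : Ψ(u) > s}. -/
import Mathlib


open MeasureTheory

noncomputable section

/-- A Young function: convex, left-continuous, `Φ 0 = 0`, tends to `∞`,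
and maps `[0,∞)` into `[0,∞)`. -/
def IsYoung (Φ : ℝ → ℝ) : Prop :=
  ConvexOn ℝ (Set.Ici 0) Φ ∧
  (∀ x : ℝ, 0 < x → ContinuousWithinAt Φ (Set.Iic x) x) ∧
  Φ 0 = 0 ∧
  Filter.Tendsto Φ Filter.atTop Filter.atTop ∧
  (∀ x : ℝ, 0 ≤ x → 0 ≤ Φ x)

/-- Generalized inverse `Φ⁻¹(s) = inf {r ≥ 0 : Φ r > s}`. -/
def yinv (Φ : ℝ → ℝ) (s : ℝ) : ℝ := sInf {r : ℝ | 0 ≤ r ∧ s < Φ r}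

/-- Euclidean space `ℝⁿ`. -/
abbrev En (n : ℕ) := EuclideanSpace ℝ (Fin n)

/-- The Lebesgue measure `|B(a,r)|` of a ball. -/
def vol {n : ℕ} (a : En n) (r : ℝ) : ℝ := (volume (Metric.ball a r)).toReal

/-- Local Orlicz average `‖f‖_{(Ψ, B(a,r))}`. -/
def orliczAvg {n : ℕ} (Ψ : ℝ → ℝ) (f : En n → ℝ) (a : En n) (r : ℝ) : ℝ :=
  sInf {b : ℝ | 0 < b ∧
    (1 / vol a r) * ∫ x in Metric.ball a r, Ψ (|f x| / b) ≤ 1}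

/-- Values `ψ(|B|)·‖f‖_{(Ψ,B)}` over all balls. -/
def MnormSet {n : ℕ} (ψ Ψ : ℝ → ℝ) (f : En n → ℝ) : Set ℝ :=
  {v : ℝ | ∃ (a : En n) (r : ℝ), 0 < r ∧ v = ψ (vol a r) * orliczAvg Ψ f a r}

/-- Orlicz–Morrey norm (Sawano–Sugano–Tanaka version). -/
def Mnorm {n : ℕ} (ψ Ψ : ℝ → ℝ) (f : En n → ℝ) : ℝ := sSup (MnormSet ψ Ψ f)

/-- Membership in the Orlicz–Morrey space `M_{ψ,Ψ}(ℝⁿ)`. -/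
def MemM {n : ℕ} (ψ Ψ : ℝ → ℝ) (f : En n → ℝ) : Prop := BddAbove (MnormSet ψ Ψ f)

/-- Local Orlicz–Morrey (Nakai) norm `‖f‖_{(φ,Φ,B(a,r))}`. -/
def sAvgN {n : ℕ} (φ Φ : ℝ → ℝ) (f : En n → ℝ) (a : En n) (r : ℝ) : ℝ :=
  sInf {b : ℝ | 0 < b ∧
    (φ (vol a r) / vol a r) * ∫ x in Metric.ball a r, Φ (|f x| / b) ≤ 1}

def LnormSet {n : ℕ} (φ Φ : ℝ → ℝ) (f : En n → ℝ) : Set ℝ :=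
  {v : ℝ | ∃ (a : En n) (r : ℝ), 0 < r ∧ v = sAvgN φ Φ f a r}

/-- Orlicz–Morrey norm (Nakai version). -/
def Lnorm {n : ℕ} (φ Φ : ℝ → ℝ) (f : En n → ℝ) : ℝ := sSup (LnormSet φ Φ f)

def MemL {n : ℕ} (φ Φ : ℝ → ℝ) (f : En n → ℝ) : Prop := BddAbove (LnormSet φ Φ f)

/-- Weak local quasinorm `‖f‖_{wL_{φ,Φ,B(a,r)}}` (Nakai version);
`sup_{t>0}(…) ≤ 1` is expressed as `∀ t > 0, … ≤ 1`. -/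
def wAvgN {n : ℕ} (φ Φ : ℝ → ℝ) (f : En n → ℝ) (a : En n) (r : ℝ) : ℝ :=
  sInf {b : ℝ | 0 < b ∧ ∀ t : ℝ, 0 < t →
    Φ t * φ (vol a r) *
      (volume {x | x ∈ Metric.ball a r ∧ t < |f x| / b}).toReal / vol a r ≤ 1}

def wLnormSet {n : ℕ} (φ Φ : ℝ → ℝ) (f : En n → ℝ) : Set ℝ :=
  {v : ℝ | ∃ (a : En n) (r : ℝ), 0 < r ∧ v = wAvgN φ Φ f a r}

/-- Weak Orlicz–Morrey quasinorm (Nakai version). -/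
def wLnorm {n : ℕ} (φ Φ : ℝ → ℝ) (f : En n → ℝ) : ℝ := sSup (wLnormSet φ Φ f)

def MemwL {n : ℕ} (φ Φ : ℝ → ℝ) (f : En n → ℝ) : Prop := BddAbove (wLnormSet φ Φ f)

/-- Weak local quasinorm `‖f‖_{wM_{Ψ,B(a,r)}}` (Sawano–Sugano–Tanaka version). -/
def wAvgS {n : ℕ} (Ψ : ℝ → ℝ) (f : En n → ℝ) (a : En n) (r : ℝ) : ℝ :=
  sInf {b : ℝ | 0 < b ∧ ∀ t : ℝ, 0 < t →
    Ψ t * (volume {x | x ∈ Metric.ball a r ∧ t < |f x| / b}).toReal / vol a r ≤ 1}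

def wMnormSet {n : ℕ} (ψ Ψ : ℝ → ℝ) (f : En n → ℝ) : Set ℝ :=
  {v : ℝ | ∃ (a : En n) (r : ℝ), 0 < r ∧ v = ψ (vol a r) * wAvgS Ψ f a r}

/-- Weak Orlicz–Morrey quasinorm (Sawano–Sugano–Tanaka version). -/
def wMnorm {n : ℕ} (ψ Ψ : ℝ → ℝ) (f : En n → ℝ) : ℝ := sSup (wMnormSet ψ Ψ f)

def MemwM {n : ℕ} (ψ Ψ : ℝ → ℝ) (f : En n → ℝ) : Prop := BddAbove (wMnormSet ψ Ψ f)

lemma young_mono {Ψ : ℝ → ℝ} (hΨ : IsYoung Ψ) {x y : ℝ} (hx : 0 ≤ x) (hxy : x ≤ y) :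
    Ψ x ≤ Ψ y := by
  rcases eq_or_lt_of_le hxy with h | h
  · exact h ▸ le_rfl
  have hy : 0 < y := lt_of_le_of_lt hx h
  have hxy1 : x / y ≤ 1 := (div_le_one hy).2 hxy
  have h1 := hΨ.1.2 (Set.mem_Ici.2 (le_refl (0:ℝ))) (Set.mem_Ici.2 hy.le)
    (by linarith : (0:ℝ) ≤ 1 - x / y) (by positivity : (0:ℝ) ≤ x / y) (by ring)
  simp only [smul_eq_mul, mul_zero, zero_add] at h1
  rw [div_mul_cancel₀ _ hy.ne'] at h1
  have hΨ0 : Ψ 0 = 0 := hΨ.2.2.1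
  have hΨy : 0 ≤ Ψ y := hΨ.2.2.2.2 y hy.le
  nlinarith

lemma young_le_lin {Ψ : ℝ → ℝ} (hΨ : IsYoung Ψ) {u : ℝ} (h0 : 0 ≤ u) (h1 : u ≤ 1) :
    Ψ u ≤ u * Ψ 1 := by
  have h2 := hΨ.1.2 (Set.mem_Ici.2 (le_refl (0:ℝ))) (Set.mem_Ici.2 (zero_le_one))
    (by linarith : (0:ℝ) ≤ 1 - u) h0 (by ring)
  have hΨ0 : Ψ 0 = 0 := hΨ.2.2.1
  simp only [smul_eq_mul, mul_zero, zero_add, mul_one, hΨ0] at h2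
  linarith

/-- `‖χ_{B(a,r₀)}‖_{wM_{Ψ,B(a,r)}} = 1/Ψ⁻¹(|B(a,r)|/|B(a,r)∩B(a,r₀)|)`. -/
theorem stmt16 (n : ℕ) (Ψ : ℝ → ℝ) (hΨ : IsYoung Ψ)
    (a : En n) (r r₀ : ℝ) (hr : 0 < r) (hr₀ : 0 < r₀) :
    wAvgS Ψ ((Metric.ball a r₀).indicator fun _ => (1 : ℝ)) a r =
      1 / yinv Ψ (vol a r / (volume (Metric.ball a r ∩ Metric.ball a r₀)).toReal) := by
  set f : En n → ℝ := (Metric.ball a r₀).indicator fun _ => (1 : ℝ) with hf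
  set V : ℝ := vol a r with hV
  set W : ℝ := (volume (Metric.ball a r ∩ Metric.ball a r₀)).toReal with hW
  -- basic volume facts
  have hball : Metric.ball a r ∩ Metric.ball a r₀ = Metric.ball a (min r r₀) := by
    ext x; simp [Metric.mem_ball, lt_min_iff]
  have hVfin : volume (Metric.ball a r) < ⊤ := measure_ball_lt_top
  have hWfin : volume (Metric.ball a r ∩ Metric.ball a r₀) < ⊤ :=
    lt_of_le_of_lt (measure_mono Set.inter_subset_left) hVfin
  have hVpos : 0 < V := by
    rw [hV]; unfold vol
    exact ENNReal.toReal_pos (Metric.measure_ball_pos volume a hr).ne' hVfin.ne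
  have hWpos : 0 < W := by
    rw [hW, hball]
    exact ENNReal.toReal_pos (Metric.measure_ball_pos volume a (lt_min hr hr₀)).ne' (by
      rw [← hball]; exact hWfin.ne)
  have hWV : W ≤ V := by
    rw [hV, hW]; unfold vol
    exact ENNReal.toReal_mono hVfin.ne (measure_mono Set.inter_subset_left)
  set s : ℝ := V / W with hs
  have hs1 : 1 ≤ s := (one_le_div hWpos).2 hWV
  -- the generalized inverse
  set T : Set ℝ := {u : ℝ | 0 ≤ u ∧ s < Ψ u} with hT
  have hTne : T.Nonempty := by
    obtain ⟨N, hN⟩ := Filter.eventually_atTop.1 (hΨ.2.2.2.1.eventually_gt_atTop s)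
    exact ⟨max N 0, le_max_right _ _, hN _ (le_max_left _ _)⟩
  have hTbdd : BddBelow T := ⟨0, fun u hu => hu.1⟩
  have hΨ1 : 0 ≤ Ψ 1 := hΨ.2.2.2.2 1 zero_le_one
  set ε : ℝ := 1 / (Ψ 1 + 1) with hε
  have hεpos : 0 < ε := by positivity
  have hε1 : ε ≤ 1 := by rw [hε, div_le_one (by linarith)]; linarith
  have hεlb : ∀ u ∈ T, ε ≤ u := by
    intro u ⟨hu0, hus⟩
    by_cases h1 : 1 ≤ u
    · linarith
    · push_neg at h1
      have := young_le_lin hΨ hu0 h1.le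
      have h2 : 1 < u * (Ψ 1 + 1) := by nlinarith
      rw [hε, div_le_iff₀ (by linarith)]
      nlinarith
  set I : ℝ := yinv Ψ s with hI
  have hIε : ε ≤ I := le_csInf hTne hεlb
  have hIpos : 0 < I := lt_of_lt_of_le hεpos hIε
  have h_lt : ∀ t : ℝ, 0 ≤ t → t < I → Ψ t ≤ s := by
    intro t ht0 htI
    by_contra h
    push_neg at h
    exact absurd (csInf_le hTbdd ⟨ht0, h⟩) (not_le.2 htI)
  have h_gt : ∀ t : ℝ, I < t → s < Ψ t := by
    intro t htI
    obtain ⟨u, ⟨hu0, hus⟩, hut⟩ := exists_lt_of_csInf_lt hTne htI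
    exact lt_of_lt_of_le hus (young_mono hΨ hu0 hut.le)
  -- the level set computation
  have hset : ∀ t b : ℝ, 0 < t →
      {x : En n | x ∈ Metric.ball a r ∧ t < |f x| / b} =
        if t < 1 / b then Metric.ball a r ∩ Metric.ball a r₀ else ∅ := by
    intro t b ht
    ext x
    simp only [Set.mem_setOf_eq]
    by_cases hx : x ∈ Metric.ball a r₀
    · rw [hf, Set.indicator_of_mem hx]
      simp only [abs_one]
      split_ifs with h
      · simp only [Set.mem_inter_iff]
        exact ⟨fun ⟨h1, _⟩ => ⟨h1, hx⟩, fun ⟨h1, _⟩ => ⟨h1, h⟩⟩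
      · simp only [Set.mem_empty_iff_false, iff_false, not_and]
        exact fun _ h2 => h h2
    · rw [hf, Set.indicator_of_notMem hx]
      simp only [abs_zero, zero_div]
      have : ¬ (t < 0) := not_lt.2 ht.le
      split_ifs with h
      · simp only [Set.mem_inter_iff]
        exact ⟨fun ⟨_, h2⟩ => absurd h2 this, fun ⟨_, h2⟩ => absurd h2 hx⟩
      · simp only [Set.mem_empty_iff_false, iff_false, not_and]
        exact fun _ => this
  -- the admissible set equals `Ici (1/I)`
  have hkey : {b : ℝ | 0 < b ∧ ∀ t : ℝ, 0 < t →
      Ψ t * (volume {x | x ∈ Metric.ball a r ∧ t < |f x| / b}).toReal / vol a r ≤ 1} =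
      Set.Ici (1 / I) := by
    ext b
    simp only [Set.mem_setOf_eq, Set.mem_Ici]
    constructor
    · rintro ⟨hb, hP⟩
      rw [div_le_iff₀ hIpos, mul_comm, ← div_le_iff₀ hb]
      by_contra h
      push_neg at h
      set t : ℝ := (I + 1 / b) / 2 with htdef
      have ht1 : I < t := by rw [htdef]; linarith
      have ht2 : t < 1 / b := by rw [htdef]; linarith
      have ht0 : 0 < t := lt_trans hIpos ht1
      have := hP t ht0
      rw [hset t b ht0, if_pos ht2] at this
      rw [← hW] at this
      have hΨts : Ψ t ≤ s := by
        rw [hs, le_div_iff₀ hWpos]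
        rw [div_le_one hVpos] at this
        exact this
      exact absurd (h_gt t ht1) (not_lt.2 hΨts)
    · intro hb'
      have hb : 0 < b := lt_of_lt_of_le (by positivity) hb'
      have hbI : 1 / b ≤ I := by
        rw [div_le_iff₀ hb, mul_comm, ← div_le_iff₀ hIpos]; exact hb'
      refine ⟨hb, fun t ht => ?_⟩
      rw [hset t b ht]
      split_ifs with h
      · rw [← hW, div_le_one hVpos, ← le_div_iff₀ hWpos, ← hs]
        exact h_lt t ht.le (lt_of_lt_of_le h hbI)
      · simp [hVpos.le]
  unfold wAvgS
  rw [hkey, csInf_Ici]
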